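/- arXiv:2404.01233 — 5 statements merged into one kernel-verified Lean document; each statement's English description precedes it below -/
import Mathlib

section
/- Let P be a probability measure supported on [a,b] with 0 < a ≤ b < ∞, let μ > 0, and let f : [a,b] → ℝ be non-decreasing and integrable against P. Then ∫ f(r)·r/(r+μ)³ dP(r) · ∫ r/(r+μ)² dP(r) ≤ ∫ f(r)·r/(r+μ)² dP(r) · ∫ r/(r+μ)³ dP(r). -/
open MeasureTheory

/-- Strict alignment implies the general alignment condition: for `f`
non-decreasing on `[a,b]` and `μ > 0`,
`∫ f(r) r/(r+μ)³ dP · ∫ r/(r+μ)² dP ≤ ∫ f(r) r/(r+μ)² dP · ∫ r/(r+μ)³ dP`. -/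
theorem strict_alignment_implies_general_alignment
    (a b μ : ℝ) (ha : 0 < a) (hab : a ≤ b)
    (P : Measure ℝ) [IsProbabilityMeasure P]
    (hsupp : ∀ᵐ r ∂P, r ∈ Set.Icc a b) (hμ : 0 < μ)
    (f : ℝ → ℝ) (hf : MonotoneOn f (Set.Icc a b))
    (hfi : Integrable f P) :
    (∫ r, f r * r / (r + μ) ^ 3 ∂P) * (∫ r, r / (r + μ) ^ 2 ∂P) ≤
      (∫ r, f r * r / (r + μ) ^ 2 ∂P) * (∫ r, r / (r + μ) ^ 3 ∂P) := by
  have haμ : 0 < a + μ := by linarith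
  set W : ℝ → ℝ := fun r => r / (r + μ) ^ 2 with hWdef
  set V : ℝ → ℝ := fun r => r / (r + μ) ^ 3 with hVdef
  have mW : Measurable W := measurable_id.div ((measurable_id.add_const μ).pow_const 2)
  have mV : Measurable V := measurable_id.div ((measurable_id.add_const μ).pow_const 3)
  -- a.e. bounds
  have hWb : ∀ᵐ r ∂P, ‖W r‖ ≤ b / (a + μ) ^ 2 := by
    filter_upwards [hsupp] with r hr
    obtain ⟨hra, hrb⟩ := hr
    have hrμ : 0 < r + μ := by linarith
    have h1 : 0 ≤ W r := div_nonneg (by linarith) (by positivity)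
    rw [Real.norm_eq_abs, abs_of_nonneg h1]
    apply div_le_div₀ (by linarith) (by linarith) (by positivity)
    exact pow_le_pow_left₀ haμ.le (by linarith) 2
  have hVb : ∀ᵐ r ∂P, ‖V r‖ ≤ b / (a + μ) ^ 3 := by
    filter_upwards [hsupp] with r hr
    obtain ⟨hra, hrb⟩ := hr
    have hrμ : 0 < r + μ := by linarith
    have h1 : 0 ≤ V r := div_nonneg (by linarith) (by positivity)
    rw [Real.norm_eq_abs, abs_of_nonneg h1]
    apply div_le_div₀ (by linarith) (by linarith) (by positivity)
    exact pow_le_pow_left₀ haμ.le (by linarith) 3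
  -- integrability
  have intW : Integrable W P :=
    (integrable_const (b / (a + μ) ^ 2)).mono' mW.aestronglyMeasurable hWb
  have intV : Integrable V P :=
    (integrable_const (b / (a + μ) ^ 3)).mono' mV.aestronglyMeasurable hVb
  have intfW : Integrable (fun r => f r * W r) P := by
    have := hfi.bdd_mul mW.aestronglyMeasurable hWb
    simpa [mul_comm] using this
  have intfV : Integrable (fun r => f r * V r) P := by
    have := hfi.bdd_mul mV.aestronglyMeasurable hVb
    simpa [mul_comm] using this
  -- integrability on product
  have i1 : Integrable (fun z : ℝ × ℝ => (f z.1 * W z.1) * V z.2) (P.prod P) :=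
    intfW.mul_prod intV
  have i2 : Integrable (fun z : ℝ × ℝ => V z.1 * (f z.2 * W z.2)) (P.prod P) :=
    intV.mul_prod intfW
  have i3 : Integrable (fun z : ℝ × ℝ => (f z.1 * V z.1) * W z.2) (P.prod P) :=
    intfV.mul_prod intW
  have i4 : Integrable (fun z : ℝ × ℝ => W z.1 * (f z.2 * V z.2)) (P.prod P) :=
    intW.mul_prod intfV
  -- a.e. support on product
  have hsupp2 : ∀ᵐ z : ℝ × ℝ ∂P.prod P, z.1 ∈ Set.Icc a b ∧ z.2 ∈ Set.Icc a b := by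
    have h1 : ∀ᵐ z : ℝ × ℝ ∂P.prod P, z.1 ∈ Set.Icc a b :=
      Measure.quasiMeasurePreserving_fst.ae hsupp
    have h2 : ∀ᵐ z : ℝ × ℝ ∂P.prod P, z.2 ∈ Set.Icc a b :=
      Measure.quasiMeasurePreserving_snd.ae hsupp
    exact h1.and h2
  -- key nonnegativity
  have key : 0 ≤ ∫ z : ℝ × ℝ,
      ((f z.1 * W z.1) * V z.2 + V z.1 * (f z.2 * W z.2)
        - ((f z.1 * V z.1) * W z.2 + W z.1 * (f z.2 * V z.2))) ∂(P.prod P) := by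
    apply integral_nonneg_of_ae
    filter_upwards [hsupp2] with z hz
    obtain ⟨⟨hx1, hx2⟩, ⟨hy1, hy2⟩⟩ := hz
    set x := z.1
    set y := z.2
    have hxμ : 0 < x + μ := by linarith
    have hyμ : 0 < y + μ := by linarith
    have hWx : 0 ≤ W x := div_nonneg (by linarith) (by positivity)
    have hWy : 0 ≤ W y := div_nonneg (by linarith) (by positivity)
    have hident : (f x * W x) * V y + V x * (f y * W y)
        - ((f x * V x) * W y + W x * (f y * V y))
        = (f x - f y) * (1 / (y + μ) - 1 / (x + μ)) * (W x * W y) := by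
      simp only [hWdef, hVdef]
      field_simp
      ring
    rw [hident]
    apply mul_nonneg _ (mul_nonneg hWx hWy)
    rcases le_total x y with hxy | hxy
    · have hff : f x ≤ f y := hf ⟨hx1, hx2⟩ ⟨hy1, hy2⟩ hxy
      have hinv : 1 / (y + μ) ≤ 1 / (x + μ) :=
        one_div_le_one_div_of_le hxμ (by linarith)
      nlinarith
    · have hff : f y ≤ f x := hf ⟨hy1, hy2⟩ ⟨hx1, hx2⟩ hxy
      have hinv : 1 / (x + μ) ≤ 1 / (y + μ) :=
        one_div_le_one_div_of_le hyμ (by linarith)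
      exact mul_nonneg (by linarith) (by linarith)
  -- evaluate the double integral
  have i12 : Integrable (fun z : ℝ × ℝ => (f z.1 * W z.1) * V z.2
      + V z.1 * (f z.2 * W z.2)) (P.prod P) := i1.add i2
  have i34 : Integrable (fun z : ℝ × ℝ => (f z.1 * V z.1) * W z.2
      + W z.1 * (f z.2 * V z.2)) (P.prod P) := i3.add i4
  rw [integral_sub i12 i34, integral_add i1 i2, integral_add i3 i4,
    integral_prod_mul (fun r => f r * W r) V, integral_prod_mul V (fun r => f r * W r),
    integral_prod_mul (fun r => f r * V r) W, integral_prod_mul W (fun r => f r * V r)] at key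
  have hAB : (∫ r, f r * V r ∂P) * (∫ r, W r ∂P) ≤
      (∫ r, f r * W r ∂P) * (∫ r, V r ∂P) := by nlinarith [key]
  have e1 : (fun r => f r * r / (r + μ) ^ 3) = fun r => f r * V r := by
    funext r; simp [hVdef, mul_div_assoc]
  have e2 : (fun r => f r * r / (r + μ) ^ 2) = fun r => f r * W r := by
    funext r; simp [hWdef, mul_div_assoc]
  rw [e1, e2]
  exact hAB
end

section
/- Let P be a probability measure supported on [a,b] with 0 < a < b < ∞. For φ > 0 let μ₀(φ) ∈ (-a,∞) be the unique solution of 1 = φ ∫ (r/(μ₀(φ)+r))² dP(r). Then μ₀ is continuous and strictly increasing on (0,∞), and μ₀(1) = 0. Moreover μ₀(φ) < 0 for φ < 1 and μ₀(φ) > 0 for φ > 1. -/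
open MeasureTheory

lemma g_integrable (a b : ℝ) (ha : 0 < a)
    (P : Measure ℝ) [IsProbabilityMeasure P]
    (hsupp : ∀ᵐ r ∂P, r ∈ Set.Icc a b)
    (μ : ℝ) (hμ : -a < μ) :
    Integrable (fun r => (r / (μ + r)) ^ 2) P := by
  have hma : 0 < μ + a := by linarith
  refine Integrable.mono' (integrable_const ((b / (μ + a)) ^ 2)) ?_ ?_
  · exact ((measurable_id.div (measurable_const.add measurable_id)).pow_const 2).aestronglyMeasurable
  · filter_upwards [hsupp] with r hr
    have hr1 : a ≤ r := hr.1
    have hr2 : r ≤ b := hr.2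
    have hpos : 0 < μ + r := by linarith
    have h0 : 0 ≤ r / (μ + r) := div_nonneg (by linarith) hpos.le
    rw [Real.norm_eq_abs, abs_of_nonneg (pow_nonneg h0 2)]
    have hle : r / (μ + r) ≤ b / (μ + a) := div_le_div₀ (by linarith) hr2 hma (by linarith)
    exact pow_le_pow_left₀ h0 hle 2

lemma g_strictAnti (a b : ℝ) (ha : 0 < a)
    (P : Measure ℝ) [IsProbabilityMeasure P]
    (hsupp : ∀ᵐ r ∂P, r ∈ Set.Icc a b)
    (μ μ' : ℝ) (hμ : -a < μ) (h : μ < μ') :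
    ∫ r, (r / (μ' + r)) ^ 2 ∂P < ∫ r, (r / (μ + r)) ^ 2 ∂P := by
  have hμ' : -a < μ' := lt_trans hμ h
  have h1 := g_integrable a b ha P hsupp μ hμ
  have h2 := g_integrable a b ha P hsupp μ' hμ'
  have key : ∀ᵐ r ∂P, (r / (μ' + r)) ^ 2 < (r / (μ + r)) ^ 2 := by
    filter_upwards [hsupp] with r hr
    have hpos : 0 < μ + r := by linarith [hr.1]
    have hpos' : 0 < μ' + r := by linarith [hr.1]
    have hrpos : 0 < r := by linarith [hr.1]
    have hlt : r / (μ' + r) < r / (μ + r) :=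
      div_lt_div_of_pos_left hrpos hpos (by linarith)
    exact pow_lt_pow_left₀ hlt (div_nonneg hrpos.le hpos'.le) two_ne_zero
  have hpos : 0 < ∫ r, ((r / (μ + r)) ^ 2 - (r / (μ' + r)) ^ 2) ∂P := by
    refine (integral_pos_iff_support_of_nonneg_ae ?_ (h1.sub h2)).2 ?_
    · filter_upwards [key] with r hr
      simpa using (sub_nonneg.2 hr.le)
    · have hsup : ∀ᵐ r ∂P,
          r ∈ Function.support (fun r => (r / (μ + r)) ^ 2 - (r / (μ' + r)) ^ 2) := by
        filter_upwards [key] with r hr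
        simp only [Function.mem_support]
        exact sub_ne_zero.2 (ne_of_gt hr)
      have hle : P Set.univ ≤ P (Function.support
          (fun r => (r / (μ + r)) ^ 2 - (r / (μ' + r)) ^ 2)) := by
        refine measure_mono_ae ?_
        filter_upwards [hsup] with r hr _
        exact hr
      calc (0:ENNReal) < 1 := by norm_num
        _ = P Set.univ := measure_univ.symm
        _ ≤ _ := hle
  rw [integral_sub h1 h2] at hpos
  linarith

lemma g_anti (a b : ℝ) (ha : 0 < a)
    (P : Measure ℝ) [IsProbabilityMeasure P]
    (hsupp : ∀ᵐ r ∂P, r ∈ Set.Icc a b)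
    (μ μ' : ℝ) (hμ : -a < μ) (h : μ ≤ μ') :
    ∫ r, (r / (μ' + r)) ^ 2 ∂P ≤ ∫ r, (r / (μ + r)) ^ 2 ∂P := by
  rcases h.lt_or_eq with hlt | heq
  · exact (g_strictAnti a b ha P hsupp μ μ' hμ hlt).le
  · rw [heq]

/-- Properties of the fixed-point map `φ ↦ μ₀(φ)`: it is continuous and
strictly increasing on `(0,∞)`, has a root at `φ = 1`, is negative for `φ < 1`
and positive for `φ > 1`. -/
theorem mu0_continuous_strictMono (a b : ℝ) (ha : 0 < a) (hab : a < b)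
    (P : Measure ℝ) [IsProbabilityMeasure P]
    (hsupp : ∀ᵐ r ∂P, r ∈ Set.Icc a b)
    (μ₀ : ℝ → ℝ)
    (hμ₀ : ∀ φ : ℝ, 0 < φ →
      -a < μ₀ φ ∧ 1 = φ * ∫ r, (r / (μ₀ φ + r)) ^ 2 ∂P) :
    ContinuousOn μ₀ (Set.Ioi 0) ∧ StrictMonoOn μ₀ (Set.Ioi 0) ∧ μ₀ 1 = 0 ∧
      (∀ φ : ℝ, 0 < φ → φ < 1 → μ₀ φ < 0) ∧
      (∀ φ : ℝ, 1 < φ → 0 < μ₀ φ) := by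
  -- value of the integral at the fixed point
  have hF : ∀ φ : ℝ, 0 < φ → ∫ r, (r / (μ₀ φ + r)) ^ 2 ∂P = 1 / φ := by
    intro φ hφ
    have he := (hμ₀ φ hφ).2
    rw [eq_div_iff (ne_of_gt hφ)]
    nlinarith [he]
  -- value at zero
  have hF0 : ∫ r, (r / ((0:ℝ) + r)) ^ 2 ∂P = 1 := by
    have : ∀ᵐ r ∂P, (r / ((0:ℝ) + r)) ^ 2 = 1 := by
      filter_upwards [hsupp] with r hr
      have : r ≠ 0 := by linarith [hr.1]
      rw [zero_add, div_self this, one_pow]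
    rw [integral_congr_ae this]
    simp
  have ha0 : -a < (0:ℝ) := by linarith
  -- strict monotonicity
  have mono : ∀ φ φ' : ℝ, 0 < φ → φ < φ' → μ₀ φ < μ₀ φ' := by
    intro φ φ' hφ hlt
    have hφ' : 0 < φ' := hφ.trans hlt
    have hd := (hμ₀ φ hφ).1
    have hd' := (hμ₀ φ' hφ').1
    have hFφ := hF φ hφ
    have hFφ' := hF φ' hφ'
    have hfrac : (1:ℝ)/φ' < 1/φ := one_div_lt_one_div_of_lt hφ hlt
    by_contra hc
    push_neg at hc
    rcases hc.lt_or_eq with hlt2 | heq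
    · have := g_strictAnti a b ha P hsupp _ _ hd' hlt2
      rw [hFφ, hFφ'] at this
      linarith
    · rw [heq] at hFφ'
      rw [hFφ] at hFφ'
      have : φ = φ' := by
        field_simp at hFφ'
        linarith
      linarith
  -- μ₀ 1 = 0
  have hone : μ₀ 1 = 0 := by
    have hd := (hμ₀ 1 one_pos).1
    have hF1 : ∫ r, (r / (μ₀ 1 + r)) ^ 2 ∂P = 1 := by
      simpa using hF 1 one_pos
    rcases lt_trichotomy (μ₀ 1) 0 with hlt | heq | hgt
    · have := g_strictAnti a b ha P hsupp _ _ hd hlt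
      rw [hF1, hF0] at this
      linarith
    · exact heq
    · have := g_strictAnti a b ha P hsupp _ _ ha0 hgt
      rw [hF1, hF0] at this
      linarith
  -- negative for φ < 1
  have hneg : ∀ φ : ℝ, 0 < φ → φ < 1 → μ₀ φ < 0 := by
    intro φ hφ hφ1
    by_contra hc
    push_neg at hc
    have h1 := g_anti a b ha P hsupp _ _ ha0 hc
    rw [hF φ hφ, hF0] at h1
    have h2 : (1:ℝ) < 1/φ := by
      rw [lt_div_iff₀ hφ]; linarith
    linarith
  -- positive for φ > 1
  have hposn : ∀ φ : ℝ, 1 < φ → 0 < μ₀ φ := by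
    intro φ hφ1
    have hφ : (0:ℝ) < φ := lt_trans one_pos hφ1
    have hd := (hμ₀ φ hφ).1
    by_contra hc
    push_neg at hc
    have h1 := g_anti a b ha P hsupp _ _ hd hc
    rw [hF φ hφ, hF0] at h1
    have h2 : (1:ℝ)/φ < 1 := by
      rw [div_lt_iff₀ hφ]; linarith
    linarith
  -- continuity
  have hcont : ContinuousOn μ₀ (Set.Ioi 0) := by
    intro φ₀ hφ₀
    have hφ₀' : (0:ℝ) < φ₀ := hφ₀
    rw [Metric.continuousWithinAt_iff]
    intro ε hε
    have hd₀ := (hμ₀ φ₀ hφ₀').1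
    set m := μ₀ φ₀ with hm
    have hε'pos : 0 < min ε ((m + a) / 2) := lt_min hε (by linarith)
    set ε' := min ε ((m + a) / 2) with hε'def
    have hε'le : ε' ≤ (m + a) / 2 := min_le_right _ _
    have hdm : -a < m - ε' := by linarith
    have hlow : ∫ r, (r / (m + r)) ^ 2 ∂P < ∫ r, (r / ((m - ε') + r)) ^ 2 ∂P :=
      g_strictAnti a b ha P hsupp _ _ hdm (by linarith)
    have hhigh : ∫ r, (r / ((m + ε') + r)) ^ 2 ∂P < ∫ r, (r / (m + r)) ^ 2 ∂P :=
      g_strictAnti a b ha P hsupp _ _ hd₀ (by linarith)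
    have hFφ₀ : ∫ r, (r / (m + r)) ^ 2 ∂P = 1 / φ₀ := hF φ₀ hφ₀'
    have hcont1 : ContinuousAt (fun φ : ℝ => 1 / φ) φ₀ :=
      ContinuousAt.div continuousAt_const continuousAt_id (ne_of_gt hφ₀')
    have hmem : ∀ᶠ φ in nhds φ₀, (1:ℝ) / φ ∈
        Set.Ioo (∫ r, (r / ((m + ε') + r)) ^ 2 ∂P)
          (∫ r, (r / ((m - ε') + r)) ^ 2 ∂P) := by
      refine hcont1 (Ioo_mem_nhds ?_ ?_)
      · simpa only [← hFφ₀] using hhigh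
      · simpa only [← hFφ₀] using hlow
    obtain ⟨δ, hδ, hδ'⟩ := Metric.eventually_nhds_iff.1 hmem
    refine ⟨δ, hδ, ?_⟩
    intro φ hφs hdist
    have hφpos : (0:ℝ) < φ := hφs
    have hdφ := (hμ₀ φ hφpos).1
    have hio := hδ' hdist
    rw [← hF φ hφpos] at hio
    have h1 : m - ε' < μ₀ φ := by
      by_contra hc
      push_neg at hc
      have := g_anti a b ha P hsupp _ _ hdφ hc
      exact absurd hio.2 (not_lt.2 this)
    have h2 : μ₀ φ < m + ε' := by
      by_contra hc
      push_neg at hc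
      have := g_anti a b ha P hsupp _ _ (by linarith : -a < m + ε') hc
      exact absurd hio.1 (not_lt.2 this)
    rw [Real.dist_eq]
    have habs : |μ₀ φ - m| < ε' := abs_lt.2 ⟨by linarith, by linarith⟩
    exact lt_of_lt_of_le habs (min_le_left _ _)
  exact ⟨hcont, fun x hx y _ hxy => mono x y hx hxy, hone, hneg, hposn⟩
end

section
/- Let P be a probability measure supported on [a,b] with 0 < a < b < ∞, and let λ_min be defined as in the paper via μ₀. Moreover λ_min is strictly increasing on (0,1) and strictly decreasing on (1,∞) as a function of φ. -/
open MeasureTheory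

/-!
Write `g(μ, φ) = μ (1 - φ ∫ r/(μ+r) dP)` (`ridgeLambda P φ μ`), so that `λ_min(φ) = g(μ₀(φ), φ)`.
For fixed `φ`, the map `μ ↦ g(μ, φ)` is convex on `(-a, ∞)` and the equation defining `μ₀(φ)`
(`IsCriticalPoint`) says that its derivative vanishes there, so `λ_min(φ) = min_μ g(μ, φ)`.
For fixed `μ`, `g(μ, φ)` is affine in `φ` with slope `-μ ∫ r/(μ+r) dP`, whose sign is opposite to
that of `μ`; and `μ₀(φ) < 0` for `φ < 1`, `μ₀(φ) > 0` for `φ > 1`. Hence for `φ₁ < φ₂ < 1`,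
`λ_min(φ₁) ≤ g(μ₀(φ₂), φ₁) < g(μ₀(φ₂), φ₂) = λ_min(φ₂)`, and symmetrically on `(1, ∞)`.
-/

noncomputable section

def ridgeLambda (P : Measure ℝ) (φ μ : ℝ) : ℝ := μ * (1 - φ * ∫ r, r / (μ + r) ∂P)

def IsCriticalPoint (P : Measure ℝ) (a φ ν : ℝ) : Prop :=
  -a < ν ∧ 1 = φ * ∫ r, (r / (ν + r)) ^ 2 ∂P

end

variable {P : Measure ℝ} {a r φ μ ν : ℝ}

lemma div_add_mem_uIcc (hr : a ≤ r) (hμ : -a < μ) : r / (μ + r) ∈ Set.uIcc 1 (a / (μ + a)) := by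
  have hμr : 0 < μ + r := by linarith
  have hμa : 0 < μ + a := by linarith
  rcases le_total 0 μ with h | h
  · refine Set.mem_uIcc.2 (Or.inr ⟨?_, ?_⟩)
    · rw [div_le_div_iff₀ hμa hμr]; nlinarith
    · rw [div_le_one hμr]; linarith
  · refine Set.mem_uIcc.2 (Or.inl ⟨?_, ?_⟩)
    · rw [one_le_div hμr]; linarith
    · rw [div_le_div_iff₀ hμr hμa]; nlinarith

/-- Tangent line inequality for the concave map `μ ↦ μ r/(μ+r)`, whose derivative is
`(r/(μ+r))²`. -/
lemma mul_div_add_le_tangent (hμ : 0 < μ + r) (hν : 0 < ν + r) :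
    μ * (r / (μ + r)) ≤ ν * (r / (ν + r)) + (μ - ν) * (r / (ν + r)) ^ 2 := by
  have gap : ν * (r / (ν + r)) + (μ - ν) * (r / (ν + r)) ^ 2 - μ * (r / (μ + r))
      = (μ - ν) ^ 2 * r ^ 2 / ((ν + r) ^ 2 * (μ + r)) := by
    field_simp
    ring
  have : 0 ≤ (μ - ν) ^ 2 * r ^ 2 / ((ν + r) ^ 2 * (μ + r)) := by positivity
  linarith

lemma integrable_div_add [IsFiniteMeasure P] (hP : ∀ᵐ r ∂P, a ≤ r) (hμ : -a < μ) :
    Integrable (fun r => r / (μ + r)) P :=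
  Integrable.of_mem_Icc _ _ (by fun_prop) (hP.mono fun _ hr => div_add_mem_uIcc hr hμ)

lemma integral_div_add_pos [IsProbabilityMeasure P] (ha : 0 < a) (hP : ∀ᵐ r ∂P, a ≤ r)
    (hμ : -a < μ) : 0 < ∫ r, r / (μ + r) ∂P := by
  have hlow : min 1 (a / (μ + a)) ≤ ∫ r, r / (μ + r) ∂P := by
    simpa using integral_mono_ae (integrable_const _) (integrable_div_add hP hμ)
      (hP.mono fun _ hr => (div_add_mem_uIcc hr hμ).1)
  have : 0 < min 1 (a / (μ + a)) := lt_min one_pos (div_pos ha (by linarith))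
  linarith

namespace IsCriticalPoint

lemma integrable_sq (hν : IsCriticalPoint P a φ ν) : Integrable (fun r => (r / (ν + r)) ^ 2) P :=
  Integrable.of_integral_ne_zero fun h => by simpa [h] using hν.2

theorem ridgeLambda_le [IsFiniteMeasure P] (hP : ∀ᵐ r ∂P, a ≤ r) (hφ : 0 < φ)
    (hν : IsCriticalPoint P a φ ν) (hμ : -a < μ) : ridgeLambda P φ ν ≤ ridgeLambda P φ μ := by
  have hJμ := (integrable_div_add hP hμ).const_mul μ
  have hJν := (integrable_div_add hP hν.1).const_mul ν
  have hI := hν.integrable_sq.const_mul (μ - ν)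
  have tangent : ∫ r, μ * (r / (μ + r)) ∂P
      ≤ ∫ r, (ν * (r / (ν + r)) + (μ - ν) * (r / (ν + r)) ^ 2) ∂P :=
    integral_mono_ae hJμ (hJν.add hI) <| hP.mono fun r hr =>
      mul_div_add_le_tangent (by linarith) (by linarith [hν.1])
  rw [integral_add hJν hI, integral_const_mul, integral_const_mul, integral_const_mul] at tangent
  have hcrit : 1 = φ * ∫ r, (r / (ν + r)) ^ 2 ∂P := hν.2
  unfold ridgeLambda
  linear_combination φ * tangent + (ν - μ) * hcrit

lemma neg_of_lt_one [IsProbabilityMeasure P] (ha : 0 ≤ a) (hP : ∀ᵐ r ∂P, a ≤ r) (hφ : 0 < φ)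
    (hφ1 : φ < 1) (hν : IsCriticalPoint P a φ ν) : ν < 0 := by
  by_contra! h
  have hI : ∫ r, (r / (ν + r)) ^ 2 ∂P ≤ ∫ _, (1 : ℝ) ∂P :=
    integral_mono_ae hν.integrable_sq (integrable_const 1) <| hP.mono fun r hr => by
      have hνr : 0 < ν + r := by linarith [hν.1]
      have hx : 0 ≤ r / (ν + r) := div_nonneg (by linarith) hνr.le
      have hx1 : r / (ν + r) ≤ 1 := (div_le_one hνr).2 (by linarith)
      nlinarith
  simp only [integral_const, probReal_univ, smul_eq_mul, one_mul] at hI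
  nlinarith [hν.2]

lemma pos_of_one_lt [IsProbabilityMeasure P] (hP : ∀ᵐ r ∂P, a ≤ r) (hφ1 : 1 < φ)
    (hν : IsCriticalPoint P a φ ν) : 0 < ν := by
  by_contra! h
  have hI : ∫ _, (1 : ℝ) ∂P ≤ ∫ r, (r / (ν + r)) ^ 2 ∂P :=
    integral_mono_ae (integrable_const 1) hν.integrable_sq <| hP.mono fun r hr => by
      have hx1 : 1 ≤ r / (ν + r) := (one_le_div (by linarith [hν.1])).2 (by linarith)
      nlinarith
  simp only [integral_const, probReal_univ, smul_eq_mul, one_mul] at hI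
  nlinarith [hν.2]

end IsCriticalPoint

lemma ridgeLambda_strictMono_of_neg (hJ : 0 < ∫ r, r / (μ + r) ∂P) (hμ : μ < 0) :
    StrictMono fun φ => ridgeLambda P φ μ := fun φ₁ φ₂ h12 => by
  simp only [ridgeLambda]
  nlinarith [mul_pos (mul_pos (sub_pos.2 h12) hJ) (neg_pos.2 hμ)]

lemma ridgeLambda_strictAnti_of_pos (hJ : 0 < ∫ r, r / (μ + r) ∂P) (hμ : 0 < μ) :
    StrictAnti fun φ => ridgeLambda P φ μ := fun φ₁ φ₂ h12 => by
  simp only [ridgeLambda]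
  nlinarith [mul_pos (mul_pos (sub_pos.2 h12) hJ) hμ]

theorem lambda_min_monotonicity_general (a b : ℝ) (ha : 0 < a)
    (P : Measure ℝ) [IsProbabilityMeasure P]
    (hsupp : ∀ᵐ r ∂P, r ∈ Set.Icc a b)
    (μ₀ : ℝ → ℝ)
    (hμ₀ : ∀ φ : ℝ, 0 < φ →
      -a < μ₀ φ ∧ 1 = φ * ∫ r, (r / (μ₀ φ + r)) ^ 2 ∂P) :
    StrictMonoOn (fun φ => μ₀ φ * (1 - φ * ∫ r, r / (μ₀ φ + r) ∂P))
        (Set.Ioo 0 1) ∧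
      StrictAntiOn (fun φ => μ₀ φ * (1 - φ * ∫ r, r / (μ₀ φ + r) ∂P))
        (Set.Ioi 1) := by
  have hP : ∀ᵐ r ∂P, a ≤ r := hsupp.mono fun _ hr => hr.1
  have hcrit : ∀ φ, 0 < φ → IsCriticalPoint P a φ (μ₀ φ) := hμ₀
  constructor
  · rintro φ₁ ⟨hφ₁, -⟩ φ₂ ⟨hφ₂, hφ₂1⟩ h12
    have hJ := integral_div_add_pos ha hP (hcrit φ₂ hφ₂).1
    calc ridgeLambda P φ₁ (μ₀ φ₁)
        ≤ ridgeLambda P φ₁ (μ₀ φ₂) := (hcrit φ₁ hφ₁).ridgeLambda_le hP hφ₁ (hcrit φ₂ hφ₂).1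
      _ < ridgeLambda P φ₂ (μ₀ φ₂) :=
        ridgeLambda_strictMono_of_neg hJ ((hcrit φ₂ hφ₂).neg_of_lt_one ha.le hP hφ₂ hφ₂1) h12
  · intro φ₁ (hφ₁ : 1 < φ₁) φ₂ (hφ₂ : 1 < φ₂) h12
    have hφ₁0 : 0 < φ₁ := by linarith
    have hφ₂0 : 0 < φ₂ := by linarith
    have hJ := integral_div_add_pos ha hP (hcrit φ₁ hφ₁0).1
    calc ridgeLambda P φ₂ (μ₀ φ₂)
        ≤ ridgeLambda P φ₂ (μ₀ φ₁) := (hcrit φ₂ hφ₂0).ridgeLambda_le hP hφ₂0 (hcrit φ₁ hφ₁0).1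
      _ < ridgeLambda P φ₁ (μ₀ φ₁) :=
        ridgeLambda_strictAnti_of_pos hJ ((hcrit φ₁ hφ₁0).pos_of_one_lt hP hφ₁) h12

/-- The minimum ridge penalty `λ_min` is strictly increasing on `(0,1)` and
strictly decreasing on `(1,∞)` as a function of the aspect ratio `φ`. -/
theorem lambda_min_monotonicity (a b : ℝ) (ha : 0 < a) (hab : a < b)
    (P : Measure ℝ) [IsProbabilityMeasure P]
    (hsupp : ∀ᵐ r ∂P, r ∈ Set.Icc a b)
    (μ₀ : ℝ → ℝ)
    (hμ₀ : ∀ φ : ℝ, 0 < φ →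
      -a < μ₀ φ ∧ 1 = φ * ∫ r, (r / (μ₀ φ + r)) ^ 2 ∂P) :
    StrictMonoOn (fun φ => μ₀ φ * (1 - φ * ∫ r, r / (μ₀ φ + r) ∂P))
        (Set.Ioo 0 1) ∧
      StrictAntiOn (fun φ => μ₀ φ * (1 - φ * ∫ r, r / (μ₀ φ + r) ∂P))
        (Set.Ioi 1) :=
  lambda_min_monotonicity_general a b ha P hsupp μ₀ hμ₀
end

section
/- Fix λ > 0 and let f(φ) = φ · ((√((φ+λ-1)²+4λ) - (φ+λ-1)) / (√((φ+λ-1)²+4λ) - (φ-λ-1)))² for φ > 0. Then f is strictly increasing on (0, λ+1) and strictly decreasing on (λ+1, ∞). -/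
/-!
With `p = φ + λ + 1` the radicand is `p² - 4φ`, and the variance factor simplifies to
`f(φ) = 4φ / (p + √(p² - 4φ))² ∈ (0, 1]`, which satisfies
`f + f⁻¹ = φ + (λ + 1)² / φ + 2λ`.
Since `z ↦ z + z⁻¹` is strictly decreasing on `(0, 1]`, `f` increases exactly where
`φ ↦ φ + (λ + 1)² / φ` decreases, namely on `(0, λ + 1]`, and decreases on `[λ + 1, ∞)`.
-/

open Set

theorem StrictAntiOn.strictMonoOn_of_comp {α β γ : Type*} [Preorder α] [LinearOrder β]
    [Preorder γ] {g : β → γ} {f : α → β} {s : Set α} {t : Set β}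
    (hg : StrictAntiOn g t) (hf : MapsTo f s t) (hgf : StrictAntiOn (g ∘ f) s) :
    StrictMonoOn f s :=
  fun _ hx _ hy hxy => (hg.lt_iff_gt (hf hy) (hf hx)).1 (hgf hx hy hxy)

theorem StrictAntiOn.strictAntiOn_of_comp {α β γ : Type*} [Preorder α] [LinearOrder β]
    [Preorder γ] {g : β → γ} {f : α → β} {s : Set α} {t : Set β}
    (hg : StrictAntiOn g t) (hf : MapsTo f s t) (hgf : StrictMonoOn (g ∘ f) s) :
    StrictAntiOn f s :=
  fun _ hx _ hy hxy => (hg.lt_iff_gt (hf hx) (hf hy)).1 (hgf hx hy hxy)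

theorem add_sq_div_sub_add_sq_div (c : ℝ) {x y : ℝ} (hx : x ≠ 0) (hy : y ≠ 0) :
    (y + c ^ 2 / y) - (x + c ^ 2 / x) = (y - x) * (x * y - c ^ 2) / (x * y) := by
  field_simp
  ring

theorem strictAntiOn_add_sq_div (c : ℝ) :
    StrictAntiOn (fun x : ℝ => x + c ^ 2 / x) (Ioc 0 c) := by
  intro x ⟨hx, hxc⟩ y ⟨hy, hyc⟩ hxy
  have hprod : x * y < c ^ 2 := by nlinarith
  have hneg : (y - x) * (x * y - c ^ 2) / (x * y) < 0 :=
    div_neg_of_neg_of_pos (mul_neg_of_pos_of_neg (by linarith) (by linarith)) (by positivity)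
  linarith [add_sq_div_sub_add_sq_div c hx.ne' hy.ne']

theorem strictMonoOn_add_sq_div {c : ℝ} (hc : 0 < c) :
    StrictMonoOn (fun x : ℝ => x + c ^ 2 / x) (Ici c) := by
  intro x hx y hy hxy
  have hx0 : 0 < x := hc.trans_le hx
  have hy0 : 0 < y := hx0.trans hxy
  have hprod : c ^ 2 < x * y := by nlinarith [mem_Ici.1 hx]
  have hpos : 0 < (y - x) * (x * y - c ^ 2) / (x * y) :=
    div_pos (mul_pos (by linarith) (by linarith)) (by positivity)
  linarith [add_sq_div_sub_add_sq_div c hx0.ne' hy0.ne']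

noncomputable def varianceFactor (lam φ : ℝ) : ℝ :=
  φ * ((Real.sqrt ((φ + lam - 1) ^ 2 + 4 * lam) - (φ + lam - 1)) /
    (Real.sqrt ((φ + lam - 1) ^ 2 + 4 * lam) - (φ - lam - 1))) ^ 2

theorem exists_varianceFactor_eq_four_mul_div_sq {lam φ : ℝ} (hlam : 0 < lam) (hφ : 0 < φ) :
    ∃ S : ℝ, 0 ≤ S ∧ S ^ 2 = (φ + lam + 1) ^ 2 - 4 * φ ∧
      varianceFactor lam φ = 4 * φ / (φ + lam + 1 + S) ^ 2 := by
  rw [varianceFactor]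
  set S := √((φ + lam - 1) ^ 2 + 4 * lam)
  have hS : S ^ 2 = (φ + lam - 1) ^ 2 + 4 * lam := Real.sq_sqrt (by positivity)
  have hS0 : 0 ≤ S := Real.sqrt_nonneg _
  -- `S² = (φ - lam - 1)² + 4 lam φ`
  have hden : φ - lam - 1 < S := by nlinarith [mul_pos hlam hφ]
  have hratio : (S - (φ + lam - 1)) / (S - (φ - lam - 1)) = 2 / (φ + lam + 1 + S) := by
    rw [div_eq_div_iff (by linarith) (by linarith)]
    linear_combination hS
  refine ⟨S, hS0, by rw [hS]; ring, ?_⟩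
  rw [hratio, div_pow]
  ring

theorem varianceFactor_mem_Ioc {lam φ : ℝ} (hlam : 0 < lam) (hφ : 0 < φ) :
    varianceFactor lam φ ∈ Ioc 0 1 := by
  obtain ⟨S, hS0, hS, hf⟩ := exists_varianceFactor_eq_four_mul_div_sq hlam hφ
  rw [hf]
  refine ⟨by positivity, (div_le_one (by positivity)).2 ?_⟩
  nlinarith

theorem varianceFactor_add_inv {lam φ : ℝ} (hlam : 0 < lam) (hφ : 0 < φ) :
    varianceFactor lam φ + (varianceFactor lam φ)⁻¹ = φ + (lam + 1) ^ 2 / φ + 2 * lam := by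
  obtain ⟨S, hS0, hS, hf⟩ := exists_varianceFactor_eq_four_mul_div_sq hlam hφ
  rw [hf, inv_div]
  set q := φ + lam + 1 + S
  have hq : 0 < q := by positivity
  field_simp
  -- with `p = φ + lam + 1` the cleared identity factors as
  -- `(q² - 2pq + 4φ)(q² + 2pq + 4φ) = 0`, and `q² - 2pq + 4φ = S² - (p² - 4φ)`
  linear_combination (q ^ 2 + 2 * (φ + lam + 1) * q + 4 * φ) * hS

/-- Non-monotonicity of the isotropic variance factor: for fixed `λ > 0`,
`f(φ) = φ ((√((φ+λ-1)²+4λ) - (φ+λ-1))/(√((φ+λ-1)²+4λ) - (φ-λ-1)))²` is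
strictly increasing on `(0, λ+1)` and strictly decreasing on `(λ+1, ∞)`. -/
theorem variance_factor_nonmonotone (lam : ℝ) (hlam : 0 < lam) :
    StrictMonoOn
      (fun φ : ℝ => φ *
        ((Real.sqrt ((φ + lam - 1) ^ 2 + 4 * lam) - (φ + lam - 1)) /
          (Real.sqrt ((φ + lam - 1) ^ 2 + 4 * lam) - (φ - lam - 1))) ^ 2)
      (Set.Ioo 0 (lam + 1)) ∧
    StrictAntiOn
      (fun φ : ℝ => φ *
        ((Real.sqrt ((φ + lam - 1) ^ 2 + 4 * lam) - (φ + lam - 1)) /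
          (Real.sqrt ((φ + lam - 1) ^ 2 + 4 * lam) - (φ - lam - 1))) ^ 2)
      (Set.Ioi (lam + 1)) := by
  show StrictMonoOn (varianceFactor lam) _ ∧ StrictAntiOn (varianceFactor lam) _
  have hJ : StrictAntiOn (fun z : ℝ => z + z⁻¹) (Ioc 0 1) := by
    simpa using strictAntiOn_add_sq_div 1
  have hmaps : MapsTo (varianceFactor lam) (Ioi 0) (Ioc 0 1) :=
    fun _ hφ => varianceFactor_mem_Ioc hlam hφ
  have hH : EqOn ((fun z : ℝ => z + z⁻¹) ∘ varianceFactor lam)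
      (fun φ => φ + (lam + 1) ^ 2 / φ + 2 * lam) (Ioi 0) :=
    fun _ hφ => varianceFactor_add_inv hlam hφ
  have hsub : Ioi (lam + 1) ⊆ Ioi 0 := Ioi_subset_Ioi (by linarith)
  constructor
  · refine hJ.strictMonoOn_of_comp (hmaps.mono_left Ioo_subset_Ioi_self) ?_
    rw [(hH.mono Ioo_subset_Ioi_self).congr_strictAntiOn]
    exact ((strictAntiOn_add_sq_div _).add_antitone antitoneOn_const).mono Ioo_subset_Ioc_self
  · refine hJ.strictAntiOn_of_comp (hmaps.mono_left hsub) ?_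
    rw [(hH.mono hsub).congr_strictMonoOn]
    exact ((strictMonoOn_add_sq_div (by linarith)).add_monotone monotoneOn_const).mono
      Ioi_subset_Ici_self
end

section
/- Let P be a probability measure supported on [a,b] with 0 < a ≤ b < ∞ and φ ∈ (0,1]. Then μ = 0 is the unique solution in [0,∞) of the equation μ = φ ∫ μ·r/(μ+r) dP(r); whereas if φ > 1, there exists a unique μ > 0 solving this equation. -/
/-!
Write `D(μ) = ∫ r / (μ + r) dP(r)`. For `μ ≠ 0` the fixed-point equation
`μ = φ ∫ μ r / (μ + r) dP` is equivalent to `φ D(μ) = 1`. Since `P` lives on `(0, ∞)`,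
`D` is continuous and strictly decreasing on `[0, ∞)`, with `D(0) = 1` and `D(μ) → 0` as
`μ → ∞`. Hence `φ D(μ) < 1` for `μ > 0` when `φ ≤ 1`, while for `φ > 1` the
intermediate value theorem gives a solution of `φ D(μ) = 1`, unique by strict monotonicity.
-/

open MeasureTheory Filter Topology Set

lemma MeasureTheory.integral_pos_of_ae_pos {α : Type*} [MeasurableSpace α] {μ : Measure α}
    [NeZero μ] {f : α → ℝ} (hf : ∀ᵐ x ∂μ, 0 < f x) (hfi : Integrable f μ) :
    0 < ∫ x, f x ∂μ := by
  rw [integral_pos_iff_support_of_nonneg_ae (hf.mono fun _ hx => hx.le) hfi, pos_iff_ne_zero]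
  intro hsupp
  have hfalse : ∀ᵐ x ∂μ, False := by
    filter_upwards [hf, measure_eq_zero_iff_ae_notMem.1 hsupp] with x hpos hx
    exact hx hpos.ne'
  exact NeZero.ne μ (ae_eq_bot.1 (eventually_false_iff_eq_bot.1 hfalse))

lemma div_add_self_mem_Icc {μ r : ℝ} (hμ : 0 ≤ μ) (hr : 0 < r) : r / (μ + r) ∈ Icc 0 1 :=
  ⟨by positivity, (div_le_one (by positivity)).2 (le_add_of_nonneg_left hμ)⟩

/-- The normalized effective degrees of freedom of ridge regression with penalty `μ` for the
spectral distribution `P`. -/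
noncomputable def degreesOfFreedom (P : Measure ℝ) (μ : ℝ) : ℝ := ∫ r, r / (μ + r) ∂P

namespace degreesOfFreedom

variable {P : Measure ℝ} {μ : ℝ}

lemma norm_integrand_le_one (hP : ∀ᵐ r ∂P, 0 < r) (hμ : 0 ≤ μ) :
    ∀ᵐ r ∂P, ‖r / (μ + r)‖ ≤ 1 := by
  filter_upwards [hP] with r hr
  have h := div_add_self_mem_Icc hμ hr
  rw [Real.norm_of_nonneg h.1]
  exact h.2

lemma aestronglyMeasurable_integrand (μ : ℝ) :
    AEStronglyMeasurable (fun r => r / (μ + r)) P :=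
  Measurable.aestronglyMeasurable (by fun_prop)

lemma integrable [IsFiniteMeasure P] (hP : ∀ᵐ r ∂P, 0 < r) (hμ : 0 ≤ μ) :
    Integrable (fun r => r / (μ + r)) P :=
  (integrable_const 1).mono' (aestronglyMeasurable_integrand μ) (norm_integrand_le_one hP hμ)

lemma nonneg (hP : ∀ᵐ r ∂P, 0 < r) (hμ : 0 ≤ μ) : 0 ≤ degreesOfFreedom P μ :=
  integral_nonneg_of_ae <| hP.mono fun _ hr => (div_add_self_mem_Icc hμ hr).1

lemma zero [IsProbabilityMeasure P] (hP : ∀ᵐ r ∂P, 0 < r) : degreesOfFreedom P 0 = 1 := by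
  rw [degreesOfFreedom, integral_congr_ae (g := fun _ => (1 : ℝ))]
  · simp
  · filter_upwards [hP] with r hr
    simp [hr.ne']

lemma strictAntiOn [IsFiniteMeasure P] [NeZero P] (hP : ∀ᵐ r ∂P, 0 < r) :
    StrictAntiOn (degreesOfFreedom P) (Ici 0) := by
  intro μ₁ hμ₁ μ₂ hμ₂ h12
  rw [← sub_pos, degreesOfFreedom, degreesOfFreedom,
    ← integral_sub (integrable hP hμ₁) (integrable hP hμ₂)]
  refine integral_pos_of_ae_pos ?_ ((integrable hP hμ₁).sub (integrable hP hμ₂))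
  filter_upwards [hP] with r hr
  exact sub_pos.2 (div_lt_div_of_pos_left hr (by linarith [mem_Ici.1 hμ₁]) (by linarith))

lemma continuousOn [IsFiniteMeasure P] (hP : ∀ᵐ r ∂P, 0 < r) :
    ContinuousOn (degreesOfFreedom P) (Ici 0) := by
  refine continuousOn_of_dominated (fun μ _ => aestronglyMeasurable_integrand μ)
    (fun μ hμ => norm_integrand_le_one hP hμ) (integrable_const 1) ?_
  filter_upwards [hP] with r hr
  exact continuousOn_const.div (continuousOn_id.add continuousOn_const)
    fun μ hμ => by linarith [mem_Ici.1 hμ]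

lemma tendsto_atTop [IsFiniteMeasure P] (hP : ∀ᵐ r ∂P, 0 < r) :
    Tendsto (degreesOfFreedom P) atTop (𝓝 0) := by
  have hlim := tendsto_integral_filter_of_dominated_convergence (μ := P) (f := fun _ => 0)
    (fun _ => 1) (Eventually.of_forall aestronglyMeasurable_integrand)
    ((eventually_ge_atTop 0).mono fun μ hμ => norm_integrand_le_one hP hμ) (integrable_const 1)
    (Eventually.of_forall fun r =>
      tendsto_const_nhds.div_atTop (tendsto_atTop_add_const_right _ r tendsto_id))
  rw [integral_zero] at hlim
  exact hlim

end degreesOfFreedom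

lemma eq_mul_integral_mul_div_iff {P : Measure ℝ} {μ φ : ℝ} (hμ : μ ≠ 0) :
    μ = φ * ∫ r, μ * r / (μ + r) ∂P ↔ φ * degreesOfFreedom P μ = 1 := by
  simp_rw [mul_div_assoc, integral_const_mul, degreesOfFreedom]
  constructor
  · intro h
    exact mul_left_cancel₀ hμ (by linear_combination -h)
  · intro h
    linear_combination -μ * h

theorem ridgeless_self_induced_regularization_general (a b φ : ℝ)
    (ha : 0 < a)
    (P : Measure ℝ) [IsProbabilityMeasure P]
    (hsupp : ∀ᵐ r ∂P, r ∈ Set.Icc a b) :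
    (φ ≤ 1 → ∀ μ : ℝ, 0 ≤ μ →
      (μ = φ * ∫ r, μ * r / (μ + r) ∂P ↔ μ = 0)) ∧
    (1 < φ → ∃! μ : ℝ, 0 < μ ∧ μ = φ * ∫ r, μ * r / (μ + r) ∂P) := by
  have hP : ∀ᵐ r ∂P, 0 < r := hsupp.mono fun r hr => ha.trans_le hr.1
  have hD0 := degreesOfFreedom.zero hP
  have hanti := degreesOfFreedom.strictAntiOn hP
  refine ⟨fun hφ1 μ hμ => ⟨fun hfix => ?_, fun h => by simp [h]⟩, fun hφ1 => ?_⟩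
  · by_contra hne
    have hpos : 0 < μ := hμ.lt_of_ne' hne
    have hlt : degreesOfFreedom P μ < 1 := hD0 ▸ hanti self_mem_Ici hμ hpos
    exact ((eq_mul_integral_mul_div_iff hne).1 hfix).not_lt
      (mul_lt_one_of_nonneg_of_lt_one_right hφ1 (degreesOfFreedom.nonneg hP hμ) hlt)
  · obtain ⟨M, hM0, hM⟩ := ((eventually_ge_atTop 0).and
      (((degreesOfFreedom.tendsto_atTop hP).const_mul φ).eventually
        (gt_mem_nhds (by simp : φ * 0 < 1)))).exists
    obtain ⟨μ, hμ, hμD⟩ := intermediate_value_Icc' hM0 (f := fun μ => φ * degreesOfFreedom P μ)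
      (continuousOn_const.mul ((degreesOfFreedom.continuousOn hP).mono Icc_subset_Ici_self))
      ⟨hM.le, by simpa [hD0] using hφ1.le⟩
    beta_reduce at hμD
    have hpos : 0 < μ := hμ.1.lt_of_ne (by rintro rfl; rw [hD0, mul_one] at hμD; linarith)
    refine ⟨μ, ⟨hpos, (eq_mul_integral_mul_div_iff hpos.ne').2 hμD⟩, ?_⟩
    rintro ν ⟨hνpos, hν⟩
    refine hanti.injOn hνpos.le hpos.le (mul_left_cancel₀ (zero_lt_one.trans hφ1).ne' ?_)
    rw [(eq_mul_integral_mul_div_iff hνpos.ne').1 hν, hμD]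

/-- Self-induced regularization of ridgeless regression: for `φ ∈ (0,1]`,
`μ = 0` is the unique solution in `[0,∞)` of `μ = φ ∫ μ r/(μ+r) dP`; for
`φ > 1` there is a unique strictly positive solution. -/
theorem ridgeless_self_induced_regularization (a b φ : ℝ)
    (ha : 0 < a) (hab : a ≤ b)
    (P : Measure ℝ) [IsProbabilityMeasure P]
    (hsupp : ∀ᵐ r ∂P, r ∈ Set.Icc a b) (hφ : 0 < φ) :
    (φ ≤ 1 → ∀ μ : ℝ, 0 ≤ μ →
      (μ = φ * ∫ r, μ * r / (μ + r) ∂P ↔ μ = 0)) ∧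
    (1 < φ → ∃! μ : ℝ, 0 < μ ∧ μ = φ * ∫ r, μ * r / (μ + r) ∂P) :=
  ridgeless_self_induced_regularization_general a b φ ha P hsupp
end
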